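/- For the DRB game on the k-dimensional grid, there exists n0 ∈ ℕ (depending only on k and the granularity γ) such that for all n ≥ n0: the random profile r ≡ 0 is not a 2-strong Nash equilibrium. Specifically, for any pair of grid neighbors u, v (i.e., d_M(u,v) = 1), if the coalition {u, v} jointly deviates to r_u = r_v = k while all other nodes keep strategy 0, then both u and v obtain strictly larger payoff than their payoff in the profile r ≡ 0. -/

import Mathlib

open Finset

noncomputable section

namespace DRB

/-- Nodes of the `k`-dimensional grid (torus) with side length `n`. -/
abbrev Node (n k : ℕ) := Fin k → Fin n

/-- Grid (Manhattan) distance on the torus: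
`d_M(u,v) = Σ_i min(|u_i - v_i|, n - |u_i - v_i|)`. -/
def dM (n k : ℕ) (u v : Node n k) : ℕ :=
  ∑ i, min ((u i : ℤ) - (v i : ℤ)).natAbs (n - ((u i : ℤ) - (v i : ℤ)).natAbs)

/-- All nodes different from `u`. -/
def others (n k : ℕ) (u : Node n k) : Finset (Node n k) :=
  Finset.univ.filter (fun v => v ≠ u)

/-- Normalization constant `c(s) = Σ_{v ≠ u} d_M(u,v)^{-s}` for node `u`. -/
def cnorm (n k : ℕ) (u : Node n k) (s : ℝ) : ℝ :=
  ∑ v ∈ others n k u, (dM n k u v : ℝ) ^ (-s)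

/-- Long-range link probability `p_u(v, s) = d_M(u,v)^{-s} / c(s)`. -/
def linkProb (n k : ℕ) (u v : Node n k) (s : ℝ) : ℝ :=
  (dM n k u v : ℝ) ^ (-s) / cnorm n k u s

/-- Link distance `D(s) = Σ_{v ≠ u} p_u(v,s) · d_M(u,v)` of node `u`. -/
def linkDist (n k : ℕ) (u : Node n k) (s : ℝ) : ℝ :=
  ∑ v ∈ others n k u, linkProb n k u v s * (dM n k u v : ℝ)

/-- Reciprocity `P_u(r) = Σ_{v ≠ u} p_u(v, r_u) · p_v(u, r_v)`. -/
def recip (n k : ℕ) (r : Node n k → ℝ) (u : Node n k) : ℝ :=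
  ∑ v ∈ others n k u, linkProb n k u v (r u) * linkProb n k v u (r v)

/-- DRB payoff `π_u(r) = D(r_u) · P_u(r)`. -/
def payoff (n k : ℕ) (r : Node n k → ℝ) (u : Node n k) : ℝ :=
  linkDist n k u (r u) * recip n k r u

/-- Membership in the strategy set `Σ = {0, γ, 2γ, 3γ, ...}`. -/
def InSigma (γ s : ℝ) : Prop := ∃ m : ℕ, s = m * γ

/-- A valid strategy profile (every coordinate lies in `Σ`). -/
def ValidProfile (n k : ℕ) (γ : ℝ) (r : Node n k → ℝ) : Prop :=
  ∀ u, InSigma γ (r u)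

/-- Nash equilibrium of the DRB game with strategy set `Σ` of granularity `γ`. -/
def IsNash (n k : ℕ) (γ : ℝ) (r : Node n k → ℝ) : Prop :=
  ∀ u : Node n k, ∀ s : ℝ, InSigma γ s →
    payoff n k r u ≥ payoff n k (Function.update r u s) u

/-- Strict Nash equilibrium. -/
def IsStrictNash (n k : ℕ) (γ : ℝ) (r : Node n k → ℝ) : Prop :=
  ∀ u : Node n k, ∀ s : ℝ, InSigma γ s → s ≠ r u →
    payoff n k r u > payoff n k (Function.update r u s) u

/-- `t`-strong Nash equilibrium: no coalition of size ≤ `t` has a weakly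
improving joint deviation that strictly improves some member. -/
def IsTStrongNash (n k : ℕ) (γ : ℝ) (t : ℕ) (r : Node n k → ℝ) : Prop :=
  ¬ ∃ (C : Finset (Node n k)) (s : Node n k → ℝ),
      C.Nonempty ∧ C.card ≤ t ∧ (∀ u ∈ C, InSigma γ (s u)) ∧
      (∀ u ∈ C,
        payoff n k (fun v => if v ∈ C then s v else r v) u ≥ payoff n k r u) ∧
      (∃ u ∈ C,
        payoff n k (fun v => if v ∈ C then s v else r v) u > payoff n k r u)

/-- Strong Nash equilibrium: coalitions of any size. -/
def IsStrongNash (n k : ℕ) (γ : ℝ) (r : Node n k → ℝ) : Prop :=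
  ¬ ∃ (C : Finset (Node n k)) (s : Node n k → ℝ),
      C.Nonempty ∧ (∀ u ∈ C, InSigma γ (s u)) ∧
      (∀ u ∈ C,
        payoff n k (fun v => if v ∈ C then s v else r v) u ≥ payoff n k r u) ∧
      (∃ u ∈ C,
        payoff n k (fun v => if v ∈ C then s v else r v) u > payoff n k r u)

/-- `b_u(j)`: the number of nodes at grid distance exactly `j` from `u`. -/
def countAt (n k : ℕ) (u : Node n k) (j : ℕ) : ℕ :=
  (Finset.univ.filter (fun v => v ≠ u ∧ dM n k u v = j)).card

/-- One asynchronous best-response step: a single node switches to a best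
response to the current profile, all other strategies unchanged. -/
def BRStep (n k : ℕ) (γ : ℝ) (r r' : Node n k → ℝ) : Prop :=
  ∃ (u : Node n k) (s : ℝ), InSigma γ s ∧
    (∀ t : ℝ, InSigma γ t →
      payoff n k (Function.update r u s) u ≥ payoff n k (Function.update r u t) u) ∧
    r' = Function.update r u s

/-- One synchronous best-response step: every node simultaneously switches
to a best response to the current profile `r`. -/
def SyncStep (n k : ℕ) (γ : ℝ) (r r' : Node n k → ℝ) : Prop :=
  ∀ u : Node n k, InSigma γ (r' u) ∧
    ∀ t : ℝ, InSigma γ t →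
      payoff n k (Function.update r u (r' u)) u ≥
        payoff n k (Function.update r u t) u

end DRB

/-!
In the uniform profile every node links uniformly at random, so its reciprocity is
`1 / (n^k - 1)` and its payoff is at most `k n / (n^k - 1)`. If two neighbours `u, v` both switch
to exponent `k`, each links to the other with probability `1 / c(k)`, and `c(k) = Σ d^{-k}` is
only polylogarithmic: `d^{-k} ≤ 2^k ∏ᵢ (dᵢ + 1)⁻¹` factorises the sum into one-dimensional
harmonic sums, so `c(k) ≤ (8 (1 + log n))^k`. Their link distance is still at least
`(n^k - 1) (k n)^{1-k} / c(k)`, so each deviator gets at least `(n^k - 1) (k n)^{1-k} / c(k)^3`,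
which beats `k n / (n^k - 1)` as soon as `2048 k (1 + log n)^3 < n`.
-/

open Real Filter

namespace DRB

variable {n k : ℕ}

def torusDist (n : ℕ) (a b : Fin n) : ℕ :=
  min ((a : ℤ) - b).natAbs (n - ((a : ℤ) - b).natAbs)

lemma natAbs_sub_lt (a b : Fin n) : ((a : ℤ) - b).natAbs < n := by omega

lemma sum_comp_le_sum_of_injOn {ι κ : Type*} {s : Finset ι} {t : Finset κ} {g : ι → κ}
    {f : κ → ℝ} (hf : ∀ j ∈ t, 0 ≤ f j) (hg : Set.InjOn g s) (hgst : Set.MapsTo g s t) :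
    ∑ i ∈ s, f (g i) ≤ ∑ j ∈ t, f j := by
  classical
  rw [← sum_image hg]
  exact sum_le_sum_of_subset_of_nonneg (image_subset_iff.2 hgst) fun j hj _ => hf j hj

lemma sum_natAbs_sub_le (f : ℕ → ℝ) (hf : ∀ j, 0 ≤ f j) (a : Fin n) :
    ∑ x : Fin n, f ((a : ℤ) - x).natAbs ≤ 2 * ∑ j ∈ range n, f j := by
  rw [← sum_filter_add_sum_filter_not univ (· ≤ a), two_mul]
  have hmaps (s : Finset (Fin n)) :
      Set.MapsTo (fun x : Fin n => ((a : ℤ) - x).natAbs) s (range n) :=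
    fun x _ => mem_range.2 (natAbs_sub_lt a x)
  refine add_le_add (sum_comp_le_sum_of_injOn (fun j _ => hf j) ?_ (hmaps _))
    (sum_comp_le_sum_of_injOn (fun j _ => hf j) ?_ (hmaps _)) <;>
  · intro x hx y hy hxy
    simp only [coe_filter, mem_univ, true_and, Set.mem_ofPred_eq, Fin.le_def] at hx hy hxy
    exact Fin.ext (by omega)

lemma inv_torusDist_add_one_le (a x : Fin n) :
    ((torusDist n a x : ℝ) + 1)⁻¹ ≤
      ((((a : ℤ) - x).natAbs : ℝ) + 1)⁻¹ + ((n - ((a : ℤ) - x).natAbs : ℕ) : ℝ)⁻¹ := by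
  have hlt := natAbs_sub_lt a x
  rcases min_choice ((a : ℤ) - x).natAbs (n - ((a : ℤ) - x).natAbs) with h | h <;>
    rw [torusDist, h]
  · exact le_add_of_nonneg_right (by positivity)
  · refine le_add_of_nonneg_of_le (by positivity) (inv_anti₀ ?_ (by linarith))
    exact_mod_cast Nat.sub_pos_of_lt hlt

lemma sum_range_inv_add_one_le (n : ℕ) : ∑ j ∈ range n, ((j : ℝ) + 1)⁻¹ ≤ 1 + log n := by
  simpa [harmonic] using harmonic_le_one_add_log n

lemma sum_range_inv_sub_eq (n : ℕ) :
    ∑ j ∈ range n, ((n - j : ℕ) : ℝ)⁻¹ = ∑ j ∈ range n, ((j : ℝ) + 1)⁻¹ := by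
  rw [← sum_range_reflect]
  refine sum_congr rfl fun j hj => ?_
  rw [show n - (n - 1 - j) = j + 1 by have := mem_range.1 hj; omega]
  push_cast; rfl

lemma sum_inv_torusDist_add_one_le (a : Fin n) :
    ∑ x : Fin n, ((torusDist n a x : ℝ) + 1)⁻¹ ≤ 4 * (1 + log n) := by
  calc ∑ x : Fin n, ((torusDist n a x : ℝ) + 1)⁻¹
      ≤ ∑ x : Fin n, (((((a : ℤ) - x).natAbs : ℝ) + 1)⁻¹
          + ((n - ((a : ℤ) - x).natAbs : ℕ) : ℝ)⁻¹) :=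
        sum_le_sum fun x _ => inv_torusDist_add_one_le a x
    _ ≤ 2 * ∑ j ∈ range n, ((j : ℝ) + 1)⁻¹ + 2 * ∑ j ∈ range n, ((n - j : ℕ) : ℝ)⁻¹ := by
        rw [sum_add_distrib]
        exact add_le_add (sum_natAbs_sub_le (fun j => ((j : ℝ) + 1)⁻¹) (fun _ => by positivity) a)
          (sum_natAbs_sub_le (fun j => ((n - j : ℕ) : ℝ)⁻¹) (fun _ => by positivity) a)
    _ = 4 * ∑ j ∈ range n, ((j : ℝ) + 1)⁻¹ := by rw [sum_range_inv_sub_eq]; ring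
    _ ≤ 4 * (1 + log n) := by linarith [sum_range_inv_add_one_le n]

lemma dM_eq_sum_torusDist (u v : Node n k) : dM n k u v = ∑ i, torusDist n (u i) (v i) := rfl

lemma torusDist_le_dM (u v : Node n k) (i : Fin k) : torusDist n (u i) (v i) ≤ dM n k u v :=
  single_le_sum (f := fun i => torusDist n (u i) (v i)) (fun _ _ => Nat.zero_le _) (mem_univ i)

lemma dM_comm (u v : Node n k) : dM n k u v = dM n k v u :=
  sum_congr rfl fun i _ => by omega

lemma dM_self (u : Node n k) : dM n k u u = 0 := by
  simp [dM]

lemma one_le_dM {u v : Node n k} (h : u ≠ v) : 1 ≤ dM n k u v := by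
  obtain ⟨i, hi⟩ := Function.ne_iff.1 h
  have hi' := Fin.val_ne_of_ne hi
  have : 1 ≤ torusDist n (u i) (v i) := by
    have := natAbs_sub_lt (u i) (v i)
    unfold torusDist; omega
  exact this.trans (torusDist_le_dM u v i)

lemma dM_le (u v : Node n k) : dM n k u v ≤ k * n := by
  calc dM n k u v ≤ ∑ _i : Fin k, n :=
        sum_le_sum fun i _ => (min_le_right _ _).trans (Nat.sub_le _ _)
    _ = k * n := by simp

lemma mem_others {u v : Node n k} : v ∈ others n k u ↔ v ≠ u := by
  simp [others]

lemma one_le_dM_of_mem_others {u v : Node n k} (hv : v ∈ others n k u) : 1 ≤ dM n k u v :=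
  one_le_dM (mem_others.1 hv).symm

lemma exists_dM_eq_one (hn : 2 ≤ n) (hk : 1 ≤ k) : ∃ u v : Node n k, dM n k u v = 1 := by
  refine ⟨fun _ => ⟨0, by omega⟩, Function.update (fun _ => ⟨0, by omega⟩) ⟨0, hk⟩ ⟨1, hn⟩, ?_⟩
  rw [dM_eq_sum_torusDist, sum_eq_single (⟨0, hk⟩ : Fin k)]
  · simp [torusDist]; omega
  · intro i _ hi
    simp [torusDist, Function.update_of_ne hi]
  · simp

lemma card_others (u : Node n k) : ((others n k u).card : ℝ) = (n : ℝ) ^ k - 1 := by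
  have : 0 < n ^ k := by simpa using Fintype.card_pos_iff.2 ⟨u⟩
  rw [others, filter_ne', card_erase_of_mem (mem_univ u), card_univ, Fintype.card_fun,
    Fintype.card_fin, Fintype.card_fin, Nat.cast_sub this]
  push_cast; ring

lemma cnorm_nonneg (u : Node n k) (s : ℝ) : 0 ≤ cnorm n k u s :=
  sum_nonneg fun _ _ => rpow_nonneg (Nat.cast_nonneg _) _

lemma cnorm_pos {u v : Node n k} (hv : v ≠ u) (s : ℝ) : 0 < cnorm n k u s :=
  sum_pos (fun _ hw => rpow_pos_of_pos (by exact_mod_cast one_le_dM_of_mem_others hw) _)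
    ⟨v, mem_others.2 hv⟩

lemma linkProb_nonneg (u v : Node n k) (s : ℝ) : 0 ≤ linkProb n k u v s :=
  div_nonneg (rpow_nonneg (Nat.cast_nonneg _) _) (cnorm_nonneg u s)

lemma sum_linkProb_le_one (u : Node n k) (s : ℝ) : ∑ v ∈ others n k u, linkProb n k u v s ≤ 1 := by
  unfold linkProb
  rw [← sum_div]
  exact div_self_le_one _

lemma linkDist_nonneg (u : Node n k) (s : ℝ) : 0 ≤ linkDist n k u s :=
  sum_nonneg fun v _ => mul_nonneg (linkProb_nonneg u v s) (Nat.cast_nonneg _)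

lemma linkDist_le (u : Node n k) (s : ℝ) : linkDist n k u s ≤ k * n := by
  calc linkDist n k u s ≤ ∑ v ∈ others n k u, linkProb n k u v s * (k * n) :=
        sum_le_sum fun v _ => mul_le_mul_of_nonneg_left (by exact_mod_cast dM_le u v)
          (linkProb_nonneg u v s)
    _ = (∑ v ∈ others n k u, linkProb n k u v s) * (k * n) := (sum_mul ..).symm
    _ ≤ k * n := mul_le_of_le_one_left (by positivity) (sum_linkProb_le_one u s)

lemma linkProb_zero (u v : Node n k) : linkProb n k u v 0 = ((n : ℝ) ^ k - 1)⁻¹ := by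
  simp [linkProb, cnorm, card_others]

lemma recip_zero (u : Node n k) : recip n k (fun _ => 0) u = ((n : ℝ) ^ k - 1)⁻¹ := by
  have h := mul_inv_mul_cancel ((n : ℝ) ^ k - 1)⁻¹
  rw [inv_inv, mul_comm _ ((n : ℝ) ^ k - 1)] at h
  simpa [recip, linkProb_zero, card_others, ← mul_assoc] using h

lemma payoff_zero_le (u : Node n k) :
    payoff n k (fun _ => 0) u ≤ k * n / ((n : ℝ) ^ k - 1) := by
  rw [payoff, recip_zero, div_eq_mul_inv]
  exact mul_le_mul_of_nonneg_right (linkDist_le u 0)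
    (inv_nonneg.2 (card_others u ▸ Nat.cast_nonneg _))

lemma rpow_neg_dM_le_prod {u w : Node n k} (hw : w ∈ others n k u) :
    (dM n k u w : ℝ) ^ (-(k : ℝ)) ≤ 2 ^ k * ∏ i, ((torusDist n (u i) (w i) : ℝ) + 1)⁻¹ := by
  set d := dM n k u w
  have hd : 1 ≤ d := one_le_dM_of_mem_others hw
  have hprod : ∏ i, ((torusDist n (u i) (w i) : ℝ) + 1) ≤ (2 * d) ^ k := by
    calc ∏ i, ((torusDist n (u i) (w i) : ℝ) + 1) ≤ ∏ _i : Fin k, (2 * d : ℝ) :=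
          prod_le_prod (fun _ _ => by positivity) fun i _ => by
            have := torusDist_le_dM u w i
            exact_mod_cast (by omega : torusDist n (u i) (w i) + 1 ≤ 2 * d)
      _ = (2 * d) ^ k := by simp
  rw [rpow_neg (Nat.cast_nonneg _), rpow_natCast, prod_inv_distrib, ← div_eq_mul_inv]
  calc ((d : ℝ) ^ k)⁻¹ = 2 ^ k / (2 * d) ^ k := by
        rw [mul_pow, div_mul_cancel_left₀ (by positivity)]
    _ ≤ 2 ^ k / ∏ i, ((torusDist n (u i) (w i) : ℝ) + 1) :=
        div_le_div_of_nonneg_left (by positivity) (prod_pos fun _ _ => by positivity) hprod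

lemma cnorm_le (u : Node n k) : cnorm n k u k ≤ (8 * (1 + log n)) ^ k := by
  calc cnorm n k u k
      ≤ ∑ w ∈ others n k u, 2 ^ k * ∏ i, ((torusDist n (u i) (w i) : ℝ) + 1)⁻¹ :=
        sum_le_sum fun _ hw => rpow_neg_dM_le_prod hw
    _ ≤ ∑ w : Node n k, 2 ^ k * ∏ i, ((torusDist n (u i) (w i) : ℝ) + 1)⁻¹ :=
        sum_le_sum_of_subset_of_nonneg (subset_univ _) fun _ _ _ => by positivity
    _ = 2 ^ k * ∏ i, ∑ x, ((torusDist n (u i) x : ℝ) + 1)⁻¹ := by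
        rw [← mul_sum, Fintype.prod_sum]
    _ ≤ 2 ^ k * ∏ _i : Fin k, 4 * (1 + log n) := by
        gcongr with i
        exact sum_inv_torusDist_add_one_le (u i)
    _ = (8 * (1 + log n)) ^ k := by
        rw [prod_const, card_univ, Fintype.card_fin, ← mul_pow]; ring_nf

lemma linkProb_of_dM_eq_one {u v : Node n k} (h : dM n k u v = 1) (s : ℝ) :
    linkProb n k u v s = (cnorm n k u s)⁻¹ := by
  simp [linkProb, h]

lemma inv_cnorm_mul_inv_cnorm_le_recip {u v : Node n k} (huv : dM n k u v = 1)
    (r : Node n k → ℝ) : (cnorm n k u (r u))⁻¹ * (cnorm n k v (r v))⁻¹ ≤ recip n k r u := by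
  have hvu : v ≠ u := by rintro rfl; simp [dM_self] at huv
  rw [← linkProb_of_dM_eq_one huv, ← linkProb_of_dM_eq_one ((dM_comm v u).trans huv)]
  exact single_le_sum (f := fun w => linkProb n k u w (r u) * linkProb n k w u (r w))
    (fun w _ => mul_nonneg (linkProb_nonneg ..) (linkProb_nonneg ..)) (mem_others.2 hvu)

lemma le_linkDist {s : ℝ} (hs : 1 ≤ s) (u : Node n k) :
    ((n : ℝ) ^ k - 1) * (k * n) ^ (1 - s) / cnorm n k u s ≤ linkDist n k u s := by
  have hterm : ∀ w ∈ others n k u, linkProb n k u w s * dM n k u w =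
      (dM n k u w : ℝ) ^ (1 - s) / cnorm n k u s := by
    intro w hw
    have hd : (0 : ℝ) < dM n k u w := by exact_mod_cast one_le_dM_of_mem_others hw
    rw [linkProb, div_mul_eq_mul_div, sub_eq_neg_add, rpow_add hd, rpow_one]
  rw [linkDist, sum_congr rfl hterm, ← sum_div, ← card_others u, ← nsmul_eq_mul, ← sum_const]
  refine div_le_div_of_nonneg_right (sum_le_sum fun w hw => ?_) (cnorm_nonneg u s)
  exact rpow_le_rpow_of_nonpos (by exact_mod_cast one_le_dM_of_mem_others hw)
    (by exact_mod_cast dM_le u w) (by linarith)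

lemma le_payoff_of_dM_eq_one {s : ℝ} (hs : 1 ≤ s) {u v : Node n k} (huv : dM n k u v = 1)
    {r : Node n k → ℝ} (hru : r u = s) :
    ((n : ℝ) ^ k - 1) * (k * n) ^ (1 - s) / (cnorm n k u s ^ 2 * cnorm n k v (r v)) ≤
      payoff n k r u := by
  have hD := le_linkDist hs u
  have hP := inv_cnorm_mul_inv_cnorm_le_recip huv r
  rw [hru] at hP
  rw [payoff, hru]
  calc ((n : ℝ) ^ k - 1) * (k * n) ^ (1 - s) / (cnorm n k u s ^ 2 * cnorm n k v (r v))
      = ((n : ℝ) ^ k - 1) * (k * n) ^ (1 - s) / cnorm n k u s *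
          ((cnorm n k u s)⁻¹ * (cnorm n k v (r v))⁻¹) := by
        simp only [div_eq_mul_inv, mul_inv, sq]; ring
    _ ≤ linkDist n k u s * recip n k r u :=
        mul_le_mul hD hP (mul_nonneg (inv_nonneg.2 (cnorm_nonneg u s))
          (inv_nonneg.2 (cnorm_nonneg v _))) (linkDist_nonneg u s)

lemma eventually_mul_one_add_log_pow_three_lt (C : ℝ) :
    ∀ᶠ n : ℕ in atTop, C * (1 + log n) ^ 3 < n := by
  refine tendsto_natCast_atTop_atTop.eventually (p := fun x : ℝ => C * (1 + log x) ^ 3 < x) ?_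
  have hC : 0 < 8 * (|C| + 1) := by positivity
  filter_upwards [(isLittleO_pow_log_id_atTop (n := 3)).bound (inv_pos.2 hC),
    eventually_ge_atTop (exp 1)] with (x : ℝ) hx hex
  have hx0 : 0 < x := (exp_pos 1).trans_le hex
  have hlog : 1 ≤ log x := (le_log_iff_exp_le hx0).2 hex
  rw [norm_pow, norm_of_nonneg (by linarith : 0 ≤ log x), id, norm_of_nonneg hx0.le] at hx
  have hcube : (1 + log x) ^ 3 ≤ 8 * log x ^ 3 := by
    nlinarith [pow_le_pow_left₀ (by linarith) (by linarith : 1 + log x ≤ 2 * log x) 3]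
  calc C * (1 + log x) ^ 3 ≤ |C| * (8 * log x ^ 3) :=
        mul_le_mul (le_abs_self C) hcube (by positivity) (abs_nonneg C)
    _ ≤ |C| * (8 * ((8 * (|C| + 1))⁻¹ * x)) := by gcongr
    _ = |C| / (|C| + 1) * x := by field_simp
    _ < x := mul_lt_of_lt_one_left hx0 ((div_lt_one (by positivity)).2 (by linarith))

lemma two_le_of_mul_one_add_log_pow_lt (hk : 1 ≤ k) (hn : 2048 * k * (1 + log n) ^ 3 < n) :
    2 ≤ n := by
  have hL : (1 : ℝ) ≤ (1 + log n) ^ 3 := one_le_pow₀ (le_add_of_nonneg_right (log_natCast_nonneg n))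
  have hk' : (1 : ℝ) ≤ k := by exact_mod_cast hk
  have : (2 : ℝ) ≤ n := by nlinarith
  exact_mod_cast this

lemma pow_mul_pow_lt_sq {x L : ℝ} (hk : 1 ≤ k) (hL : 1 ≤ L) (hx : 2048 * k * L ^ 3 < x) :
    (k * x) ^ k * ((8 * L) ^ k) ^ 3 < (x ^ k - 1) ^ 2 := by
  have hk' : (1 : ℝ) ≤ k := by exact_mod_cast hk
  have hL3 : 1 ≤ L ^ 3 := one_le_pow₀ hL
  have hx2 : 2 ≤ x := by nlinarith
  have hxk : 2 ≤ x ^ k := hx2.trans (le_self_pow₀ (by linarith) (by omega))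
  calc (k * x) ^ k * ((8 * L) ^ k) ^ 3 = (512 * k * x * L ^ 3) ^ k := by
        rw [← pow_mul, mul_comm k 3, pow_mul, ← mul_pow]; ring_nf
    _ < (x ^ 2 / 4) ^ k := pow_lt_pow_left₀ (by nlinarith) (by positivity) (by omega)
    _ = (x ^ k) ^ 2 / 4 ^ k := by rw [div_pow, pow_right_comm]
    _ ≤ (x ^ k) ^ 2 / 4 := div_le_div_of_nonneg_left (by positivity) (by norm_num)
        (le_self_pow₀ (by norm_num) (by omega))
    _ ≤ (x ^ k - 1) ^ 2 := by nlinarith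

lemma payoff_zero_lt_of_dM_eq_one (hk : 1 ≤ k) (hn : 2048 * k * (1 + log n) ^ 3 < n)
    {u v : Node n k} (huv : dM n k u v = 1) {r : Node n k → ℝ} (hru : r u = k) (hrv : r v = k) :
    payoff n k (fun _ => 0) u < payoff n k r u := by
  set M := (8 * (1 + log n)) ^ k
  set N := (n : ℝ) ^ k - 1
  have hvu : v ≠ u := by rintro rfl; simp [dM_self] at huv
  have hL : 1 ≤ 1 + log n := le_add_of_nonneg_right (log_natCast_nonneg n)
  have hn2 : (2 : ℝ) ≤ n := by exact_mod_cast two_le_of_mul_one_add_log_pow_lt hk hn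
  have hN : 0 < N := sub_pos.2 (one_lt_pow₀ (by linarith) (by omega))
  have hkn : (0 : ℝ) < k * n := by have : 0 < k := hk; positivity
  have hM : 0 < M := (cnorm_pos hvu k).trans_le (cnorm_le u)
  have hcancel : ((k : ℝ) * n) ^ k * (k * n) ^ (1 - (k : ℝ)) = k * n := by
    rw [← rpow_natCast, ← rpow_add hkn, add_sub_cancel, rpow_one]
  calc payoff n k (fun _ => 0) u ≤ k * n / N := payoff_zero_le u
    _ < N * (k * n) ^ (1 - (k : ℝ)) / M ^ 3 := by
        rw [div_lt_div_iff₀ hN (by positivity)]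
        calc k * n * M ^ 3 = (k * n) ^ k * M ^ 3 * (k * n) ^ (1 - (k : ℝ)) := by
              rw [mul_right_comm _ (M ^ 3), hcancel]
          _ < N ^ 2 * (k * n) ^ (1 - (k : ℝ)) :=
              mul_lt_mul_of_pos_right (pow_mul_pow_lt_sq hk hL hn) (rpow_pos_of_pos hkn _)
          _ = N * (k * n) ^ (1 - (k : ℝ)) * N := by ring
    _ ≤ N * (k * n) ^ (1 - (k : ℝ)) / (cnorm n k u k ^ 2 * cnorm n k v (r v)) := by
        rw [hrv]
        refine div_le_div_of_nonneg_left (by positivity)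
          (mul_pos (pow_pos (cnorm_pos hvu _) 2) (cnorm_pos hvu.symm _)) ?_
        calc cnorm n k u k ^ 2 * cnorm n k v k ≤ M ^ 2 * M :=
              mul_le_mul (pow_le_pow_left₀ (cnorm_nonneg u _) (cnorm_le u) 2) (cnorm_le v)
                (cnorm_nonneg v _) (by positivity)
          _ = M ^ 3 := by ring
    _ ≤ payoff n k r u := le_payoff_of_dM_eq_one (by exact_mod_cast hk) huv hru

lemma not_isTStrongNash_of_pair {γ σ : ℝ} {t : ℕ} {r : Node n k → ℝ} (ht : 2 ≤ t)
    (hσ : InSigma γ σ) {u v : Node n k}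
    (hu : payoff n k r u <
      payoff n k (fun w => if w ∈ ({u, v} : Finset (Node n k)) then σ else r w) u)
    (hv : payoff n k r v <
      payoff n k (fun w => if w ∈ ({u, v} : Finset (Node n k)) then σ else r w) v) :
    ¬ IsTStrongNash n k γ t r := fun h =>
  h ⟨{u, v}, fun _ => σ, insert_nonempty _ _, card_le_two.trans ht, fun _ _ => hσ,
    fun w hw => by
      rcases mem_insert.1 hw with rfl | hw
      · exact hu.le
      · exact mem_singleton.1 hw ▸ hv.le,
    ⟨u, mem_insert_self _ _, hu⟩⟩

end DRB

/-- For sufficiently large `n`, the random profile `r ≡ 0` is not a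
2-strong Nash equilibrium: any pair of grid neighbors `u, v` (with
`d_M(u,v) = 1`) that jointly deviates to strategy `k` makes both strictly better
off. -/
theorem random_not_two_strong_nash (k g : ℕ) (hk : 1 ≤ k) (hg : 2 ≤ g) :
    ∃ n0 : ℕ, ∀ n : ℕ, n0 ≤ n →
      ¬ DRB.IsTStrongNash n k (g : ℝ)⁻¹ 2 (fun _ => (0 : ℝ)) ∧
      ∀ u v : DRB.Node n k, DRB.dM n k u v = 1 →
        DRB.payoff n k
            (Function.update (Function.update (fun _ => (0 : ℝ)) u (k : ℝ)) v (k : ℝ)) u >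
          DRB.payoff n k (fun _ => (0 : ℝ)) u ∧
        DRB.payoff n k
            (Function.update (Function.update (fun _ => (0 : ℝ)) u (k : ℝ)) v (k : ℝ)) v >
          DRB.payoff n k (fun _ => (0 : ℝ)) v := by
  obtain ⟨n0, hn0⟩ :=
    eventually_atTop.1 (DRB.eventually_mul_one_add_log_pow_three_lt (2048 * k))
  refine ⟨n0, fun n hn => ?_⟩
  have hlarge := hn0 n hn
  have improves {u v : DRB.Node n k} {r : DRB.Node n k → ℝ} (huv : DRB.dM n k u v = 1)
      (hru : r u = k) (hrv : r v = k) := DRB.payoff_zero_lt_of_dM_eq_one hk hlarge huv hru hrv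
  have hk_mem : DRB.InSigma (g : ℝ)⁻¹ k :=
    ⟨k * g, by push_cast; field_simp [show (g : ℝ) ≠ 0 by positivity]⟩
  obtain ⟨u₀, v₀, h₀⟩ :=
    DRB.exists_dM_eq_one (DRB.two_le_of_mul_one_add_log_pow_lt hk hlarge) hk
  have h₀' := (DRB.dM_comm v₀ u₀).trans h₀
  refine ⟨DRB.not_isTStrongNash_of_pair le_rfl hk_mem (improves h₀ (by simp) (by simp))
    (improves h₀' (by simp) (by simp)), fun u v huv =>
      ⟨improves huv ?_ ?_, improves ((DRB.dM_comm v u).trans huv) ?_ ?_⟩⟩ <;>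
    simp [Function.update_apply]
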